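/- For any edge e of a rooted spanning tree T, at most one edge among any set of pairwise incomparable descendant edges of e can be an edge in which e is down-interested; consequently the set of descendant edges of e in which e is down-interested forms a downward path within T_e. -/

import Mathlib

open Finset

/-- Total weight of graph edges with one endpoint in `A` and the other in `B`
(summed over ordered pairs). -/
def betw {V : Type*} [Fintype V] (w : V → V → ℝ) (A B : Finset V) : ℝ :=
  ∑ u ∈ A, ∑ v ∈ B, w u v

/-- Weight of the cut `(S, V \\ S)`: total weight of edges leaving `S`. -/
def cutw {V : Type*} [Fintype V] [DecidableEq V] (w : V → V → ℝ) (S : Finset V) : ℝ :=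
  betw w S Sᶜ

/-!
Down-interest in an edge with subtree `B` means that `B` alone carries more than half of the
cut of `Te`. Enlarging `B` only adds nonnegative weight, and two disjoint subtrees of `Te`
together carry at most the whole cut, so they cannot both carry more than half of it.
-/

section Betw

variable {V : Type*} [Fintype V] (w : V → V → ℝ)

lemma betw_mono_left (hnn : ∀ u v, 0 ≤ w u v) {A A' : Finset V} (h : A ⊆ A')
    (B : Finset V) : betw w A B ≤ betw w A' B :=
  sum_le_sum_of_subset_of_nonneg h fun u _ _ => sum_nonneg fun v _ => hnn u v

lemma betw_union_left [DecidableEq V] {A A' : Finset V} (h : Disjoint A A') (B : Finset V) :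
    betw w (A ∪ A') B = betw w A B + betw w A' B :=
  sum_union h

lemma betw_add_betw_le_cutw [DecidableEq V] (hnn : ∀ u v, 0 ≤ w u v) {S A A' : Finset V}
    (hA : A ⊆ S) (hA' : A' ⊆ S) (h : Disjoint A A') :
    betw w A Sᶜ + betw w A' Sᶜ ≤ cutw w S := by
  rw [← betw_union_left w h]
  exact betw_mono_left w hnn (union_subset hA hA') Sᶜ

end Betw

theorem stmt_6_general {V : Type*} [Fintype V] [DecidableEq V] (w : V → V → ℝ)
    (hnn : ∀ u v, 0 ≤ w u v)
    (Te B' B'' : Finset V) (hB' : B' ⊆ Te) (hB'' : B'' ⊆ Te) :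
    (B' ⊆ B'' → cutw w Te < 2 * betw w B' Teᶜ → cutw w Te < 2 * betw w B'' Teᶜ) ∧
    (Disjoint B' B'' →
      ¬ (cutw w Te < 2 * betw w B' Teᶜ ∧ cutw w Te < 2 * betw w B'' Teᶜ)) := by
  constructor
  · intro hsub h
    linarith [betw_mono_left w hnn hsub Teᶜ]
  · rintro hdis ⟨h', h''⟩
    linarith [betw_add_betw_le_cutw w hnn hB' hB'' hdis]

/-- The descendant edges of `e` in which `e` is down-interested form a downward
path within `Te`: (a) down-interest in an edge with subtree `B'` implies
down-interest in any ancestor edge, whose subtree `B''` contains `B'`;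
(b) at most one of any two incomparable descendant edges (disjoint subtrees
`B', B'' ⊆ Te`) can be down-interesting for `e`. -/
theorem stmt_6 {V : Type*} [Fintype V] [DecidableEq V] (w : V → V → ℝ)
    (hsym : ∀ u v, w u v = w v u) (hnn : ∀ u v, 0 ≤ w u v)
    (Te B' B'' : Finset V) (hB' : B' ⊆ Te) (hB'' : B'' ⊆ Te) :
    (B' ⊆ B'' → cutw w Te < 2 * betw w B' Teᶜ → cutw w Te < 2 * betw w B'' Teᶜ) ∧
    (Disjoint B' B'' →
      ¬ (cutw w Te < 2 * betw w B' Teᶜ ∧ cutw w Te < 2 * betw w B'' Teᶜ)) :=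
  stmt_6_general w hnn Te B' B'' hB' hB''
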